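/- arXiv:1206.4717 — 3 statements merged into one kernel-verified Lean document; each statement's English description precedes it below -/
import Mathlib

section
/- Let Φ' : B^n' × B^m → B^n', Φ'' : B^n'' × B^m → B^n''. For any progressive functions ρ' ∈ P_{n'}, ρ'' ∈ P_{n''} supported on a common sequence (t_k) ∈ Seq, any μ' ∈ B^n', μ'' ∈ B^n'', any input signal u : ℝ → B^m, and all t ∈ ℝ: (Φ'||Φ'')^{ρ'×ρ''}((μ',μ''),u,t) = (Φ'^{ρ'}(μ',u,t), Φ''^{ρ''}(μ'',u,t)). -/
/-! The parallel connection acts blockwise, so a `ν`-update of the combined system is the pair of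
`ν`-updates of the components, and by induction so is every iterate. Since the three progressive
functions share their support sequence, the run at time `s` of each system is the same iterate,
fed with the same inputs. -/

open scoped Classical

namespace AS

/-- A sequence `α : ℕ → 𝔹ⁿ` is progressive if every coordinate takes the value 1 infinitely often. -/
def ProgSeq {n : ℕ} (α : ℕ → Fin n → Bool) : Prop :=
  ∀ i : Fin n, {k : ℕ | α k i = true}.Infinite

/-- Identification of `𝔹^{n'} × 𝔹^{n''}` with `𝔹^{n'+n''}`. -/
def app {n' n'' : ℕ} (x : Fin n' → Bool) (y : Fin n'' → Bool) : Fin (n' + n'') → Bool :=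
  Fin.addCases x y

/-- The first `n'` coordinates. -/
def fstPart {n' n'' : ℕ} (μ : Fin (n' + n'') → Bool) : Fin n' → Bool :=
  fun i => μ (Fin.castAdd n'' i)

/-- The last `n''` coordinates. -/
def sndPart {n' n'' : ℕ} (μ : Fin (n' + n'') → Bool) : Fin n'' → Bool :=
  fun i => μ (Fin.natAdd n' i)

/-- Parallel connection of generator functions. -/
def par {n' n'' m : ℕ} (Φ' : (Fin n' → Bool) → (Fin m → Bool) → Fin n' → Bool)
    (Φ'' : (Fin n'' → Bool) → (Fin m → Bool) → Fin n'' → Bool) :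
    (Fin (n' + n'') → Bool) → (Fin m → Bool) → Fin (n' + n'') → Bool :=
  fun μ lam => app (Φ' (fstPart μ) lam) (Φ'' (sndPart μ) lam)

/-- `μ` with coordinate `j` complemented. -/
def negAt {n : ℕ} (μ : Fin n → Bool) (j : Fin n) : Fin n → Bool :=
  Function.update μ j (!(μ j))

/-- Boolean partial derivative of `Φ_i` with respect to `μ_j`. -/
def bderiv {n m : ℕ} (Φ : (Fin n → Bool) → (Fin m → Bool) → Fin n → Bool)
    (i j : Fin n) (μ : Fin n → Bool) (lam : Fin m → Bool) : Bool :=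
  xor (Φ μ lam i) (Φ (negAt μ j) lam i)

/-- `Φ^ν`. -/
def nuAct {n m : ℕ} (Φ : (Fin n → Bool) → (Fin m → Bool) → Fin n → Bool)
    (ν μ : Fin n → Bool) (lam : Fin m → Bool) : Fin n → Bool :=
  fun i => xor ((!(ν i)) && μ i) (ν i && Φ μ lam i)

/-- The iterates: `iter Φ α lam μ 0 = ω₋₁ = μ`, `iter Φ α lam μ (k+1) = ωₖ = Φ^{α k}(ω_{k-1}, lam k)`. -/
def iter {n m : ℕ} (Φ : (Fin n → Bool) → (Fin m → Bool) → Fin n → Bool)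
    (α : ℕ → Fin n → Bool) (lam : ℕ → Fin m → Bool) (μ : Fin n → Bool) : ℕ → Fin n → Bool
  | 0 => μ
  | k + 1 => nuAct Φ (α k) (iter Φ α lam μ k) (lam k)

/-- A strictly increasing sequence of reals, unbounded from above. -/
def IsSeq (t : ℕ → ℝ) : Prop :=
  StrictMono t ∧ ∀ T : ℝ, ∃ k, T < t k

/-- The function `ρ(s) = ⊕ₖ α(k)·χ_{{t_k}}(s)`. -/
noncomputable def progFun {n : ℕ} (α : ℕ → Fin n → Bool) (t : ℕ → ℝ) : ℝ → Fin n → Bool :=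
  fun s i => decide (∃ k, s = t k ∧ α k i = true)

/-- A progressive function `ℝ → 𝔹ⁿ`. -/
def IsProgFun {n : ℕ} (ρ : ℝ → Fin n → Bool) : Prop :=
  ∃ α t, ProgSeq α ∧ IsSeq t ∧ ρ = progFun α t

/-- The data of a progressive function: a progressive sequence of vectors on an
unbounded strictly increasing support sequence. -/
structure PF (n : ℕ) where
  α : ℕ → Fin n → Bool
  t : ℕ → ℝ
  mono : StrictMono t
  unbdd : ∀ T : ℝ, ∃ k, T < t k
  prog : ProgSeq α

/-- The underlying progressive function `ℝ → 𝔹ⁿ` of `ρ : PF n`. -/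
noncomputable def PF.toFun {n : ℕ} (ρ : PF n) : ℝ → Fin n → Bool := progFun ρ.α ρ.t

/-- The signal `Φ^ρ(μ,u,·)`. -/
noncomputable def PF.run {n m : ℕ} (Φ : (Fin n → Bool) → (Fin m → Bool) → Fin n → Bool)
    (ρ : PF n) (μ : Fin n → Bool) (u : ℝ → Fin m → Bool) : ℝ → Fin n → Bool :=
  fun s => iter Φ ρ.α (fun k => u (ρ.t k)) μ (Nat.find (ρ.unbdd s))

/-- The universal regular asynchronous system generated by `Φ`. -/
def Xi {n m : ℕ} (Φ : (Fin n → Bool) → (Fin m → Bool) → Fin n → Bool)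
    (u : ℝ → Fin m → Bool) : Set (ℝ → Fin n → Bool) :=
  {x | ∃ (μ : Fin n → Bool) (ρ : PF n), x = PF.run Φ ρ μ u}

/-- `μ` is the initial value `x(-∞+0)` of `x`. -/
def InitVal {n : ℕ} (x : ℝ → Fin n → Bool) (μ : Fin n → Bool) : Prop :=
  ∃ T : ℝ, ∀ s < T, x s = μ

/-- Projection of a progressive function onto the first `n'` coordinates. -/
def PF.fst {n' n'' : ℕ} (ρ : PF (n' + n'')) : PF n' :=
  ⟨fun k => fstPart (ρ.α k), ρ.t, ρ.mono, ρ.unbdd, fun i => ρ.prog (Fin.castAdd n'' i)⟩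

/-- Projection of a progressive function onto the last `n''` coordinates. -/
def PF.snd {n' n'' : ℕ} (ρ : PF (n' + n'')) : PF n'' :=
  ⟨fun k => sndPart (ρ.α k), ρ.t, ρ.mono, ρ.unbdd, fun i => ρ.prog (Fin.natAdd n' i)⟩

/-- `x` is a signal: eventually constant to the left, piecewise constant on `[t_k, t_{k+1})`. -/
def IsSignal {n : ℕ} (x : ℝ → Fin n → Bool) : Prop :=
  ∃ (μ : Fin n → Bool) (t : ℕ → ℝ), IsSeq t ∧ (∀ s, s < t 0 → x s = μ) ∧
    ∀ k, ∀ s, t k ≤ s → s < t (k + 1) → x s = x (t k)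

end AS

namespace AS

variable {n n' n'' m : ℕ}

@[simp]
lemma fstPart_app (x : Fin n' → Bool) (y : Fin n'' → Bool) : fstPart (app x y) = x := by
  funext i; simp [fstPart, app]

@[simp]
lemma sndPart_app (x : Fin n' → Bool) (y : Fin n'' → Bool) : sndPart (app x y) = y := by
  funext i; simp [sndPart, app]

lemma nuAct_par (Φ' : (Fin n' → Bool) → (Fin m → Bool) → Fin n' → Bool)
    (Φ'' : (Fin n'' → Bool) → (Fin m → Bool) → Fin n'' → Bool)
    (ν' μ' : Fin n' → Bool) (ν'' μ'' : Fin n'' → Bool) (lam : Fin m → Bool) :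
    nuAct (par Φ' Φ'') (app ν' ν'') (app μ' μ'') lam =
      app (nuAct Φ' ν' μ' lam) (nuAct Φ'' ν'' μ'' lam) := by
  funext i
  refine Fin.addCases (fun i => ?_) (fun i => ?_) i <;> simp [nuAct, par, app]

lemma iter_par (Φ' : (Fin n' → Bool) → (Fin m → Bool) → Fin n' → Bool)
    (Φ'' : (Fin n'' → Bool) → (Fin m → Bool) → Fin n'' → Bool)
    (α' : ℕ → Fin n' → Bool) (α'' : ℕ → Fin n'' → Bool)
    (lam : ℕ → Fin m → Bool) (μ' : Fin n' → Bool) (μ'' : Fin n'' → Bool) (k : ℕ) :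
    iter (par Φ' Φ'') (fun j => app (α' j) (α'' j)) lam (app μ' μ'') k =
      app (iter Φ' α' lam μ' k) (iter Φ'' α'' lam μ'' k) := by
  induction k with
  | zero => rfl
  | succ k ih => simp only [iter, ih, nuAct_par]

lemma PF.run_eq_iter_of_t_eq {k : ℕ} (Φ : (Fin n → Bool) → (Fin m → Bool) → Fin n → Bool)
    {ρ : PF n} {σ : PF k} (ht : ρ.t = σ.t) (μ : Fin n → Bool) (u : ℝ → Fin m → Bool) (s : ℝ) :
    ρ.run Φ μ u s = iter Φ ρ.α (fun j => u (σ.t j)) μ (Nat.find (σ.unbdd s)) := by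
  simp only [PF.run, ht]

end AS

/-- `(Φ'||Φ'')^{ρ'×ρ''}((μ',μ''),u,t) = (Φ'^{ρ'}(μ',u,t), Φ''^{ρ''}(μ'',u,t))`
for progressive functions `ρ'`, `ρ''` supported on a common sequence. -/
theorem run_par {n' n'' m : ℕ}
    (Φ' : (Fin n' → Bool) → (Fin m → Bool) → Fin n' → Bool)
    (Φ'' : (Fin n'' → Bool) → (Fin m → Bool) → Fin n'' → Bool)
    (ρ' : AS.PF n') (ρ'' : AS.PF n'') (ρ : AS.PF (n' + n''))
    (hts : ρ'.t = ρ''.t) (ht : ρ.t = ρ'.t)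
    (hα : ∀ k, ρ.α k = AS.app (ρ'.α k) (ρ''.α k))
    (μ' : Fin n' → Bool) (μ'' : Fin n'' → Bool) (u : ℝ → Fin m → Bool) (s : ℝ) :
    AS.PF.run (AS.par Φ' Φ'') ρ (AS.app μ' μ'') u s =
      AS.app (AS.PF.run Φ' ρ' μ' u s) (AS.PF.run Φ'' ρ'' μ'' u s) := by
  rw [AS.PF.run_eq_iter_of_t_eq _ ht, AS.PF.run_eq_iter_of_t_eq _ hts.symm, funext hα]
  exact AS.iter_par Φ' Φ'' ρ'.α ρ''.α _ μ' μ'' _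
end

section
/- Let f : U → P*(S^(n)) be a regular asynchronous system with f ⊂ Ξ_Φ, i.e., f(u) ⊆ Ξ_Φ(u) for all u ∈ U, where f(u) is always nonempty. Then there exists a function π assigning to each pair (μ,u) with u ∈ U and μ ∈ φ_0(u) (φ_0(u) = {x(-∞+0) | x ∈ f(u)} being the set of initial values) a nonempty set π(μ,u) of progressive functions, such that for all u ∈ U, f(u) = {Φ^ρ(μ,u,·) | μ ∈ φ_0(u), ρ ∈ π(μ,u)}. Conversely, if such π exists, then f ⊂ Ξ_Φ. -/
open scoped Classical

namespace AS

variable {n m : ℕ}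

theorem initVal_run (Φ : (Fin n → Bool) → (Fin m → Bool) → Fin n → Bool)
    (ρ : PF n) (μ : Fin n → Bool) (u : ℝ → Fin m → Bool) :
    InitVal (PF.run Φ ρ μ u) μ := by
  refine ⟨ρ.t 0, fun s hs => ?_⟩
  have h_first : Nat.find (ρ.unbdd s) = 0 := (Nat.find_eq_zero _).2 hs
  simp only [PF.run, h_first, iter]

theorem InitVal.unique {x : ℝ → Fin n → Bool} {μ μ' : Fin n → Bool}
    (h : InitVal x μ) (h' : InitVal x μ') : μ = μ' := by
  obtain ⟨T, hT⟩ := h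
  obtain ⟨T', hT'⟩ := h'
  have hs : min T T' - 1 < min T T' := by linarith
  rw [← hT _ (hs.trans_le (min_le_left _ _)), ← hT' _ (hs.trans_le (min_le_right _ _))]

def computationFun (Φ : (Fin n → Bool) → (Fin m → Bool) → Fin n → Bool)
    (f : (ℝ → Fin m → Bool) → Set (ℝ → Fin n → Bool)) (μ : Fin n → Bool)
    (u : ℝ → Fin m → Bool) : Set (PF n) :=
  {ρ | PF.run Φ ρ μ u ∈ f u}

variable {Φ : (Fin n → Bool) → (Fin m → Bool) → Fin n → Bool}
  {f : (ℝ → Fin m → Bool) → Set (ℝ → Fin n → Bool)} {u : ℝ → Fin m → Bool}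

theorem computationFun_nonempty (hf : f u ⊆ Xi Φ u) {μ : Fin n → Bool}
    (hμ : ∃ x ∈ f u, InitVal x μ) : (computationFun Φ f μ u).Nonempty := by
  obtain ⟨x, hx, hxμ⟩ := hμ
  obtain ⟨μ', ρ, rfl⟩ := hf hx
  obtain rfl : μ = μ' := hxμ.unique (initVal_run Φ ρ μ' u)
  exact ⟨ρ, hx⟩

theorem eq_setOf_run_computationFun (hf : f u ⊆ Xi Φ u) :
    f u = {x | ∃ μ : Fin n → Bool, (∃ y ∈ f u, InitVal y μ) ∧
      ∃ ρ ∈ computationFun Φ f μ u, x = PF.run Φ ρ μ u} := by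
  ext x
  constructor
  · intro hx
    obtain ⟨μ, ρ, rfl⟩ := hf hx
    exact ⟨μ, ⟨_, hx, initVal_run Φ ρ μ u⟩, ρ, hx, rfl⟩
  · rintro ⟨μ, -, ρ, hρ, rfl⟩
    exact hρ

end AS

theorem regular_iff_computation_function_general {n m : ℕ}
    (Φ : (Fin n → Bool) → (Fin m → Bool) → Fin n → Bool)
    (U : Set (ℝ → Fin m → Bool))
    (f : (ℝ → Fin m → Bool) → Set (ℝ → Fin n → Bool)) :
    (∀ u ∈ U, f u ⊆ AS.Xi Φ u) ↔
      ∃ π : (Fin n → Bool) → (ℝ → Fin m → Bool) → Set (AS.PF n),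
        (∀ u ∈ U, ∀ μ : Fin n → Bool, (∃ x ∈ f u, AS.InitVal x μ) → (π μ u).Nonempty) ∧
        (∀ u ∈ U, f u = {x | ∃ μ : Fin n → Bool, (∃ y ∈ f u, AS.InitVal y μ) ∧
          ∃ ρ ∈ π μ u, x = AS.PF.run Φ ρ μ u}) := by
  constructor
  · intro hf
    exact ⟨AS.computationFun Φ f, fun u hu _ hμ => AS.computationFun_nonempty (hf u hu) hμ,
      fun u hu => AS.eq_setOf_run_computationFun (hf u hu)⟩
  · rintro ⟨π, -, hπ⟩ u hu x hx
    rw [hπ u hu] at hx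
    obtain ⟨μ, -, ρ, -, rfl⟩ := hx
    exact ⟨μ, ρ, rfl⟩

/-- a system `f` (with nonempty values) satisfies `f ⊂ Ξ_Φ` if and only if there
exists a computation function `π`, defined (with nonempty values) on the pairs `(μ,u)` with
`u ∈ U` and `μ ∈ φ₀(u)`, such that `f(u) = {Φ^ρ(μ,u,·) | μ ∈ φ₀(u), ρ ∈ π(μ,u)}` for all `u ∈ U`. -/
theorem regular_iff_computation_function {n m : ℕ}
    (Φ : (Fin n → Bool) → (Fin m → Bool) → Fin n → Bool)
    (U : Set (ℝ → Fin m → Bool)) (hU : U.Nonempty)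
    (f : (ℝ → Fin m → Bool) → Set (ℝ → Fin n → Bool))
    (hne : ∀ u ∈ U, (f u).Nonempty) :
    (∀ u ∈ U, f u ⊆ AS.Xi Φ u) ↔
      ∃ π : (Fin n → Bool) → (ℝ → Fin m → Bool) → Set (AS.PF n),
        (∀ u ∈ U, ∀ μ : Fin n → Bool, (∃ x ∈ f u, AS.InitVal x μ) → (π μ u).Nonempty) ∧
        (∀ u ∈ U, f u = {x | ∃ μ : Fin n → Bool, (∃ y ∈ f u, AS.InitVal y μ) ∧
          ∃ ρ ∈ π μ u, x = AS.PF.run Φ ρ μ u}) :=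
  regular_iff_computation_function_general Φ U f
end

section
/- Let f ⊂ Ξ_Φ be a regular asynchronous system with f(u) = {Φ^ρ(μ,u,·) | μ ∈ φ_0(u), ρ ∈ π(μ,u)}, and suppose Φ = Φ'||Φ'' with n', n'' > 0, n'+n'' = n. Define f'(u) = {Φ'^{ρ'}(μ',u,·) | μ' ∈ φ'_0(u), ρ' ∈ π'(μ',u)} and f''(u) analogously, where φ'_0(u) and π'(μ',u) are the projections onto first n' coordinates of φ_0(u) and π. Then f(u) ⊆ (f'||f'')(u) = f'(u) × f''(u) for all u ∈ U. -/
open scoped Classical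

/-- The projection `φ₀'` of the initial state function onto the first `n'` coordinates. -/
def phiFst {n' n'' m : ℕ} (φ0 : (ℝ → Fin m → Bool) → Set (Fin (n' + n'') → Bool))
    (u : ℝ → Fin m → Bool) : Set (Fin n' → Bool) :=
  {ν | ∃ μ ∈ φ0 u, AS.fstPart μ = ν}

/-- The projection `φ₀''` of the initial state function onto the last `n''` coordinates. -/
def phiSnd {n' n'' m : ℕ} (φ0 : (ℝ → Fin m → Bool) → Set (Fin (n' + n'') → Bool))
    (u : ℝ → Fin m → Bool) : Set (Fin n'' → Bool) :=
  {ν | ∃ μ ∈ φ0 u, AS.sndPart μ = ν}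

/-- The projection `π'` of the computation function onto the first `n'` coordinates. -/
def piFst {n' n'' m : ℕ} (φ0 : (ℝ → Fin m → Bool) → Set (Fin (n' + n'') → Bool))
    (π : (Fin (n' + n'') → Bool) → (ℝ → Fin m → Bool) → Set (AS.PF (n' + n'')))
    (ν : Fin n' → Bool) (u : ℝ → Fin m → Bool) : Set (AS.PF n') :=
  {σ | ∃ μ ∈ φ0 u, AS.fstPart μ = ν ∧ ∃ ρ ∈ π μ u, σ = AS.PF.fst ρ}

/-- The projection `π''` of the computation function onto the last `n''` coordinates. -/
def piSnd {n' n'' m : ℕ} (φ0 : (ℝ → Fin m → Bool) → Set (Fin (n' + n'') → Bool))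
    (π : (Fin (n' + n'') → Bool) → (ℝ → Fin m → Bool) → Set (AS.PF (n' + n'')))
    (ν : Fin n'' → Bool) (u : ℝ → Fin m → Bool) : Set (AS.PF n'') :=
  {σ | ∃ μ ∈ φ0 u, AS.sndPart μ = ν ∧ ∃ ρ ∈ π μ u, σ = AS.PF.snd ρ}

/-- The system `f'` generated by `Φ'` from the projected data `φ₀'`, `π'`. -/
def fFst {n' n'' m : ℕ} (Φ' : (Fin n' → Bool) → (Fin m → Bool) → Fin n' → Bool)
    (φ0 : (ℝ → Fin m → Bool) → Set (Fin (n' + n'') → Bool))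
    (π : (Fin (n' + n'') → Bool) → (ℝ → Fin m → Bool) → Set (AS.PF (n' + n'')))
    (u : ℝ → Fin m → Bool) : Set (ℝ → Fin n' → Bool) :=
  {x | ∃ ν ∈ phiFst φ0 u, ∃ σ ∈ piFst φ0 π ν u, x = AS.PF.run Φ' σ ν u}

/-- The system `f''` generated by `Φ''` from the projected data `φ₀''`, `π''`. -/
def fSnd {n' n'' m : ℕ} (Φ'' : (Fin n'' → Bool) → (Fin m → Bool) → Fin n'' → Bool)
    (φ0 : (ℝ → Fin m → Bool) → Set (Fin (n' + n'') → Bool))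
    (π : (Fin (n' + n'') → Bool) → (ℝ → Fin m → Bool) → Set (AS.PF (n' + n'')))
    (u : ℝ → Fin m → Bool) : Set (ℝ → Fin n'' → Bool) :=
  {x | ∃ ν ∈ phiSnd φ0 u, ∃ σ ∈ piSnd φ0 π ν u, x = AS.PF.run Φ'' σ ν u}

namespace AS

theorem app_fstPart_sndPart {n' n'' : ℕ} (μ : Fin (n' + n'') → Bool) :
    app (fstPart μ) (sndPart μ) = μ := by
  funext i
  refine Fin.addCases (fun j => ?_) (fun j => ?_) i <;> simp [app, fstPart, sndPart]

section Par

variable {n' n'' m : ℕ} (Φ' : (Fin n' → Bool) → (Fin m → Bool) → Fin n' → Bool)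
  (Φ'' : (Fin n'' → Bool) → (Fin m → Bool) → Fin n'' → Bool)

theorem fstPart_nuAct_par (ν μ : Fin (n' + n'') → Bool) (lam : Fin m → Bool) :
    fstPart (nuAct (par Φ' Φ'') ν μ lam) = nuAct Φ' (fstPart ν) (fstPart μ) lam := by
  funext i
  simp [fstPart, nuAct, par, app]

theorem sndPart_nuAct_par (ν μ : Fin (n' + n'') → Bool) (lam : Fin m → Bool) :
    sndPart (nuAct (par Φ' Φ'') ν μ lam) = nuAct Φ'' (sndPart ν) (sndPart μ) lam := by
  funext i
  simp [sndPart, nuAct, par, app]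

theorem fstPart_iter_par (α : ℕ → Fin (n' + n'') → Bool) (lam : ℕ → Fin m → Bool)
    (μ : Fin (n' + n'') → Bool) (k : ℕ) :
    fstPart (iter (par Φ' Φ'') α lam μ k) =
      iter Φ' (fun j => fstPart (α j)) lam (fstPart μ) k := by
  induction k with
  | zero => rfl
  | succ k ih => rw [iter, iter, fstPart_nuAct_par, ih]

theorem sndPart_iter_par (α : ℕ → Fin (n' + n'') → Bool) (lam : ℕ → Fin m → Bool)
    (μ : Fin (n' + n'') → Bool) (k : ℕ) :
    sndPart (iter (par Φ' Φ'') α lam μ k) =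
      iter Φ'' (fun j => sndPart (α j)) lam (sndPart μ) k := by
  induction k with
  | zero => rfl
  | succ k ih => rw [iter, iter, sndPart_nuAct_par, ih]

/-- The projections `ρ.fst`, `ρ.snd` share the support sequence of `ρ`, so all three runs
read off the same iterate at each time. -/
theorem PF.run_par (ρ : PF (n' + n'')) (μ : Fin (n' + n'') → Bool)
    (u : ℝ → Fin m → Bool) :
    ρ.run (par Φ' Φ'') μ u = fun s => app (ρ.fst.run Φ' (fstPart μ) u s)
      (ρ.snd.run Φ'' (sndPart μ) u s) := by
  funext s
  rw [← app_fstPart_sndPart (ρ.run (par Φ' Φ'') μ u s)]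
  exact congrArg₂ app (fstPart_iter_par Φ' Φ'' _ _ _ _) (sndPart_iter_par Φ' Φ'' _ _ _ _)

end Par

end AS

/-- if `f ⊂ Ξ_Φ` with `Φ = Φ'||Φ''`, then `f(u) ⊆ f'(u) × f''(u)` for all `u ∈ U`,
where `f'`, `f''` are the systems generated by `Φ'`, `Φ''` from the projections of `φ₀`, `π`. -/
theorem f_subset_par {n' n'' m : ℕ}
    (Φ : (Fin (n' + n'') → Bool) → (Fin m → Bool) → Fin (n' + n'') → Bool)
    (Φ' : (Fin n' → Bool) → (Fin m → Bool) → Fin n' → Bool)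
    (Φ'' : (Fin n'' → Bool) → (Fin m → Bool) → Fin n'' → Bool)
    (hΦ : Φ = AS.par Φ' Φ'')
    (U : Set (ℝ → Fin m → Bool))
    (f : (ℝ → Fin m → Bool) → Set (ℝ → Fin (n' + n'') → Bool))
    (φ0 : (ℝ → Fin m → Bool) → Set (Fin (n' + n'') → Bool))
    (π : (Fin (n' + n'') → Bool) → (ℝ → Fin m → Bool) → Set (AS.PF (n' + n'')))
    (hf : ∀ u ∈ U, f u = {x | ∃ μ ∈ φ0 u, ∃ ρ ∈ π μ u, x = AS.PF.run Φ ρ μ u}) :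
    ∀ u ∈ U, ∀ x ∈ f u, ∃ x' ∈ fFst Φ' φ0 π u, ∃ x'' ∈ fSnd Φ'' φ0 π u,
      x = fun s => AS.app (x' s) (x'' s) := by
  subst hΦ
  intro u hu x hx
  rw [hf u hu] at hx
  obtain ⟨μ, hμ, ρ, hρ, rfl⟩ := hx
  exact ⟨_, ⟨AS.fstPart μ, ⟨μ, hμ, rfl⟩, ρ.fst, ⟨μ, hμ, rfl, ρ, hρ, rfl⟩, rfl⟩,
    _, ⟨AS.sndPart μ, ⟨μ, hμ, rfl⟩, ρ.snd, ⟨μ, hμ, rfl, ρ, hρ, rfl⟩, rfl⟩,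
    AS.PF.run_par Φ' Φ'' ρ μ u⟩
end
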